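/- arXiv:1601.01435 — 4 statements merged into one kernel-verified Lean document; each statement's English description precedes it below -/
import Mathlib

section
/- Let h, g, σ > 0 with h < g and α ∈ (0,1]. Define f(p) = log₂(1 + h·p/σ²) − log₂(1 + g·(1−α)·p/(α·g·p + σ²)) and X(α) = (σ²/α)·(1/h − 1/g). Then the derivative of f with respect to p evaluated at p = X(α) is nonnegative. -/
theorem stmt_3 (h g σ α : ℝ) (hh : 0 < h) (hg : 0 < g) (hσ : 0 < σ)
    (hlt : h < g) (hα0 : 0 < α) (hα1 : α ≤ 1)
    (X : ℝ) (hX : X = (σ^2 / α) * (1 / h - 1 / g))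
    (f : ℝ → ℝ)
    (hf : ∀ p : ℝ, f p =
      Real.logb 2 (1 + h * p / σ^2)
      - Real.logb 2 (1 + g * (1 - α) * p / (α * g * p + σ^2))) :
    0 ≤ deriv f X := by
  have hσ2 : (0:ℝ) < σ^2 := by positivity
  have hgh : 0 < g - h := sub_pos.2 hlt
  have hX0 : 0 < X := by
    rw [hX]
    have h1 : 0 < 1 / h - 1 / g := by
      rw [sub_pos]
      exact one_div_lt_one_div_of_lt hh hlt
    positivity
  set A := σ^2 + h*X with hAdef
  set B := g*X + σ^2 with hBdef
  set C := α*g*X + σ^2 with hCdef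
  have hA : 0 < A := by rw [hAdef]; positivity
  have hB : 0 < B := by rw [hBdef]; positivity
  have hC : 0 < C := by rw [hCdef]; positivity
  -- derivative of the nice form
  have d1 : HasDerivAt (fun p : ℝ => σ^2 + h*p) h X := by
    simpa using ((hasDerivAt_id X).const_mul h).const_add (σ^2)
  have d2 : HasDerivAt (fun p : ℝ => g*p + σ^2) g X := by
    simpa using ((hasDerivAt_id X).const_mul g).add_const (σ^2)
  have d3 : HasDerivAt (fun p : ℝ => α*g*p + σ^2) (α*g) X := by
    simpa [mul_assoc] using ((hasDerivAt_id X).const_mul (α*g)).add_const (σ^2)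
  have hF : HasDerivAt (fun p : ℝ =>
      (Real.log (σ^2 + h*p) - Real.log (σ^2) - Real.log (g*p + σ^2)
        + Real.log (α*g*p + σ^2)) / Real.log 2)
      ((h/A - g/B + α*g/C)/Real.log 2) X := by
    simpa only [sub_zero, Pi.add_apply, Pi.sub_apply] using ((((d1.log hA.ne').sub (hasDerivAt_const X (Real.log (σ^2)))).sub
      (d2.log hB.ne')).add (d3.log hC.ne')).div_const (Real.log 2)
  -- f agrees with the nice form near X
  have heq : f =ᶠ[nhds X] (fun p : ℝ =>
      (Real.log (σ^2 + h*p) - Real.log (σ^2) - Real.log (g*p + σ^2)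
        + Real.log (α*g*p + σ^2)) / Real.log 2) := by
    filter_upwards [eventually_gt_nhds hX0] with p hp
    have hPA : (0:ℝ) < σ^2 + h*p := by positivity
    have hPB : (0:ℝ) < g*p + σ^2 := by positivity
    have hPC : (0:ℝ) < α*g*p + σ^2 := by positivity
    rw [hf]
    have e1 : 1 + h * p / σ^2 = (σ^2 + h*p)/σ^2 := by field_simp
    have e2 : 1 + g * (1 - α) * p / (α * g * p + σ^2) = (g*p + σ^2)/(α*g*p + σ^2) := by
      field_simp
      ring
    rw [e1, e2, Real.logb, Real.logb, Real.log_div hPA.ne' hσ2.ne',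
      Real.log_div hPB.ne' hPC.ne']
    ring
  have hD : HasDerivAt f ((h/A - g/B + α*g/C)/Real.log 2) X :=
    hF.congr_of_eventuallyEq heq
  rw [hD.deriv]
  have hlog2 : (0:ℝ) < Real.log 2 := Real.log_pos (by norm_num)
  apply div_nonneg _ hlog2.le
  -- the key algebraic inequality
  have E : α*h*g*X = σ^2*(g-h) := by
    rw [hX]; field_simp
  have hNeq : h*B*C - g*A*C + α*g*A*B
      = σ^2*(g*X*(g-h) + σ^2*(g-h) + α*g*σ^2) := by
    rw [hAdef, hBdef, hCdef]
    linear_combination (g*X + 2*σ^2) * E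
  have hN : 0 ≤ h*B*C - g*A*C + α*g*A*B := by
    rw [hNeq]; positivity
  have hrw : h/A - g/B + α*g/C = (h*B*C - g*A*C + α*g*A*B)/(A*B*C) := by
    field_simp
  rw [hrw]
  positivity
end

section
/- Let h, g, σ, p > 0 with h > g. Then the function R(α) = log₂(1 + (1−α)·h·p/(α·h·p + σ²)) − log₂(1 + (1−α)·g·p/(α·g·p + σ²)) is monotonically nonincreasing on [0,1], and hence is maximized at α = 0. -/
/-! Since `1 + (1 - α) x / (α x + σ²) = (x + σ²) / (α x + σ²)`, the rate `R α` is the logarithm of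
`(h p + σ²) / (g p + σ²) · (α g p + σ²) / (α h p + σ²)`, and the second factor decreases in `α`
because `g ≤ h`: the artificial noise hurts the stronger receiver relatively more. -/

open Set

lemma one_add_mul_div_eq_div (α x c : ℝ) (hc : α * x + c ≠ 0) :
    1 + (1 - α) * x / (α * x + c) = (x + c) / (α * x + c) := by
  field_simp
  ring

lemma antitoneOn_mul_add_div_mul_add {a b c : ℝ} (ha : 0 ≤ a) (hab : a ≤ b) (hc : 0 < c) :
    AntitoneOn (fun α => (α * a + c) / (α * b + c)) (Ici 0) := by
  intro α (hα : 0 ≤ α) β (hβ : 0 ≤ β) hαβ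
  have hb : 0 ≤ b := ha.trans hab
  rw [div_le_div_iff₀ (by positivity) (by positivity)]
  nlinarith [mul_nonneg (sub_nonneg.2 hαβ) (mul_nonneg (sub_nonneg.2 hab) hc.le)]

lemma antitoneOn_gain_ratio {a b c : ℝ} (ha : 0 ≤ a) (hab : a ≤ b) (hc : 0 < c) :
    AntitoneOn (fun α => ((b + c) / (α * b + c)) / ((a + c) / (α * a + c))) (Ici 0) := by
  have hb : 0 ≤ b := ha.trans hab
  have hK : 0 ≤ (b + c) / (a + c) := by positivity
  intro α (hα : 0 ≤ α) β (hβ : 0 ≤ β) hαβ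
  simp only [div_div_div_comm _ (α * b + c), div_div_eq_mul_div, div_div_div_comm _ (β * b + c),
    mul_div_assoc]
  exact mul_le_mul_of_nonneg_left (antitoneOn_mul_add_div_mul_add ha hab hc hα hβ hαβ) hK

theorem stmt_5 (h g σ p : ℝ) (hh : 0 < h) (hg : 0 < g) (hσ : 0 < σ) (hp : 0 < p)
    (hgt : g < h)
    (R : ℝ → ℝ)
    (hR : ∀ α : ℝ, R α =
      Real.logb 2 (1 + (1 - α) * h * p / (α * h * p + σ^2))
      - Real.logb 2 (1 + (1 - α) * g * p / (α * g * p + σ^2))) :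
    AntitoneOn R (Set.Icc 0 1) ∧ ∀ α ∈ Set.Icc (0:ℝ) 1, R α ≤ R 0 := by
  set ratio := fun α : ℝ =>
    ((h * p + σ ^ 2) / (α * (h * p) + σ ^ 2)) / ((g * p + σ ^ 2) / (α * (g * p) + σ ^ 2))
  have hR_log : ∀ α ∈ Ici (0 : ℝ), R α = Real.logb 2 (ratio α) := by
    intro α (hα : 0 ≤ α)
    rw [hR, Real.logb_div (by positivity) (by positivity)]
    simp only [mul_assoc]
    rw [one_add_mul_div_eq_div _ _ _ (by positivity), one_add_mul_div_eq_div _ _ _ (by positivity)]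
  have hratio_pos : ∀ α ∈ Ici (0 : ℝ), 0 < ratio α := fun α (hα : 0 ≤ α) => by positivity
  have hanti : AntitoneOn R (Icc 0 1) := by
    intro α hα β hβ hαβ
    rw [hR_log α hα.1, hR_log β hβ.1]
    refine Real.logb_le_logb_of_le one_lt_two ?_ ?_
    · exact hratio_pos β hβ.1
    · exact antitoneOn_gain_ratio (by positivity) (by gcongr) (by positivity) hα.1 hβ.1 hαβ
  exact ⟨hanti, fun α hα => hanti (left_mem_Icc.2 zero_le_one) hα hα.1⟩
end

section
/- Let h, g, σ, p > 0 and define g(α) = log₂(1 + (1−α)·h·p/σ²) − log₂(1 + (1−α)·g·p/(α·g·p + σ²)) on [0,1]. Then any stationary point α* of g in (0,1) satisfies α* = 1/2 + (σ²/(2p))·(1/h − 1/g). -/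
/-! Since `1 + (1 - α) g p / (α g p + σ²) = (g p + σ²) / (α g p + σ²)`, the derivative of the
secrecy rate is `(g p / (α g p + σ²) - h p / (σ² + (1 - α) h p)) / log 2`, and its vanishing is
a linear equation in `α`. -/

open Real

lemma HasDerivAt.logb_one_add_div {u v : ℝ → ℝ} {u' v' x : ℝ} (b : ℝ)
    (hu : HasDerivAt u u' x) (hv : HasDerivAt v v' x) (hv0 : v x ≠ 0) (huv : v x + u x ≠ 0) :
    HasDerivAt (fun y => Real.logb b (1 + u y / v y))
      (((v' + u') / (v x + u x) - v' / v x) / Real.log b) x := by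
  have hq : 1 + u x / v x ≠ 0 := by
    rwa [one_add_div hv0, div_ne_zero_iff, and_iff_left hv0]
  have hlog := (((hu.div hv hv0).const_add 1).log hq).div_const (Real.log b)
  simp only [log_div_log, Pi.div_apply] at hlog
  refine hlog.congr_deriv ?_
  field_simp
  ring

noncomputable def secrecyRate (h g σ p α : ℝ) : ℝ :=
  logb 2 (1 + (1 - α) * h * p / σ ^ 2) - logb 2 (1 + (1 - α) * g * p / (α * g * p + σ ^ 2))

lemma hasDerivAt_secrecyRate {h g σ p α : ℝ} (hh : 0 ≤ h) (hg : 0 ≤ g) (hp : 0 ≤ p)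
    (hσ : σ ≠ 0) (hα : α ∈ Set.Icc (0 : ℝ) 1) :
    HasDerivAt (secrecyRate h g σ p)
      ((g * p / (α * g * p + σ ^ 2) - h * p / (σ ^ 2 + (1 - α) * h * p)) / log 2) α := by
  obtain ⟨hα0, hα1⟩ := hα
  have hσ2 : 0 < σ ^ 2 := by positivity
  have hαgp : 0 ≤ α * g * p := by positivity
  have hαhp : 0 ≤ (1 - α) * h * p := mul_nonneg (mul_nonneg (by linarith) hh) hp
  have hlegit : HasDerivAt (fun x => (1 - x) * h * p) (-(h * p)) α := by
    simpa using (((hasDerivAt_id α).const_sub 1).mul_const h).mul_const p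
  have heve : HasDerivAt (fun x => (1 - x) * g * p) (-(g * p)) α := by
    simpa using (((hasDerivAt_id α).const_sub 1).mul_const g).mul_const p
  have hnoise : HasDerivAt (fun x => x * g * p + σ ^ 2) (g * p) α := by
    simpa using (((hasDerivAt_id α).mul_const g).mul_const p).add_const (σ ^ 2)
  have hA := hlegit.logb_one_add_div 2 (hasDerivAt_const α (σ ^ 2)) hσ2.ne' (by positivity)
  have hB := heve.logb_one_add_div 2 hnoise (by positivity) (by positivity)
  refine (hA.sub hB).congr_deriv ?_
  ring

lemma eq_of_secrecyRate_stationary {h g σ p α : ℝ} (hh : h ≠ 0) (hg : g ≠ 0) (hp : p ≠ 0)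
    (hA : σ ^ 2 + (1 - α) * h * p ≠ 0) (hB : α * g * p + σ ^ 2 ≠ 0)
    (hstat : g * p / (α * g * p + σ ^ 2) = h * p / (σ ^ 2 + (1 - α) * h * p)) :
    α = 1 / 2 + (σ ^ 2 / (2 * p)) * (1 / h - 1 / g) := by
  rw [div_eq_div_iff hB hA] at hstat
  have key : α * (2 * h * g * p) = h * g * p + σ ^ 2 * (g - h) :=
    mul_left_cancel₀ hp (by linear_combination -hstat)
  field_simp
  linear_combination key

theorem stmt_8 (h g σ p : ℝ) (hh : 0 < h) (hg : 0 < g) (hσ : 0 < σ) (hp : 0 < p)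
    (G : ℝ → ℝ)
    (hG : ∀ α : ℝ, G α =
      Real.logb 2 (1 + (1 - α) * h * p / σ^2)
      - Real.logb 2 (1 + (1 - α) * g * p / (α * g * p + σ^2))) :
    ∀ α ∈ Set.Ioo (0:ℝ) 1, deriv G α = 0 →
      α = 1 / 2 + (σ^2 / (2 * p)) * (1 / h - 1 / g) := by
  rintro α ⟨hα0, hα1⟩ hstat
  obtain rfl : G = secrecyRate h g σ p := funext hG
  rw [(hasDerivAt_secrecyRate hh.le hg.le hp.le hσ.ne' ⟨hα0.le, hα1.le⟩).deriv,
    div_eq_zero_iff, or_iff_left (log_pos one_lt_two).ne', sub_eq_zero] at hstat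
  have hαhp : 0 < (1 - α) * h * p := mul_pos (mul_pos (sub_pos.2 hα1) hh) hp
  exact eq_of_secrecyRate_stationary hh.ne' hg.ne' hp.ne' (by positivity) (by positivity) hstat
end

section
/- Let h, g, σ, p > 0 with h < g and α ∈ (0,1), and let φ(α) = log₂(1 + (1−α)·h·p/σ²) − log₂(1 + (1−α)·g·p/(α·g·p + σ²)) be the secrecy rate function. Then φ′(α) = 0 has at most one solution in (0,1), namely α = 1/2 + (σ²/(2p))·(1/h − 1/g). -/
theorem stmt_15 (h g σ p : ℝ) (hh : 0 < h) (hg : 0 < g) (hσ : 0 < σ) (hp : 0 < p)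
    (hlt : h < g)
    (φ : ℝ → ℝ)
    (hφ : ∀ α : ℝ, φ α =
      Real.logb 2 (1 + (1 - α) * h * p / σ^2)
      - Real.logb 2 (1 + (1 - α) * g * p / (α * g * p + σ^2))) :
    ∀ α ∈ Set.Ioo (0:ℝ) 1, deriv φ α = 0 →
      α = 1 / 2 + (σ^2 / (2 * p)) * (1 / h - 1 / g) := by
  intro α hα hder
  obtain ⟨hα0, hα1⟩ := hα
  have hσ2 : (0:ℝ) < σ^2 := by positivity
  have h1α : (0:ℝ) < 1 - α := by linarith
  have hd : 0 < α * g * p + σ^2 := by nlinarith [mul_pos (mul_pos hα0 hg) hp]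
  have hA : 0 < 1 + (1 - α) * h * p / σ^2 := by
    have := div_pos (mul_pos (mul_pos h1α hh) hp) hσ2; linarith
  have hB : 0 < 1 + (1 - α) * g * p / (α * g * p + σ^2) := by
    have := div_pos (mul_pos (mul_pos h1α hg) hp) hd; linarith
  -- derivative of A
  have hb : HasDerivAt (fun x : ℝ => 1 - x) (-1) α := by
    simpa using (hasDerivAt_id' α).const_sub (1:ℝ)
  have hAd : HasDerivAt (fun x : ℝ => 1 + (1 - x) * h * p / σ^2) (-(h * p) / σ^2) α := by
    have h0 := (((hb.mul_const h).mul_const p).div_const (σ^2)).const_add (1:ℝ)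
    exact h0.congr_deriv (by ring)
  -- derivative of B
  have hn : HasDerivAt (fun x : ℝ => (1 - x) * g * p) (-(g * p)) α := by
    have := (hb.mul_const g).mul_const p
    exact this.congr_deriv (by ring)
  have hdd : HasDerivAt (fun x : ℝ => x * g * p + σ^2) (g * p) α := by
    have := (((hasDerivAt_id α).mul_const g).mul_const p).add_const (σ^2)
    exact this.congr_deriv (by ring)
  have hBd : HasDerivAt (fun x : ℝ => 1 + (1 - x) * g * p / (x * g * p + σ^2))
      ((-(g * p) * (α * g * p + σ^2) - (1 - α) * g * p * (g * p)) / (α * g * p + σ^2)^2)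
      α := by
    simpa using (hn.div hdd hd.ne').const_add (1:ℝ)
  have hlogA := hAd.log hA.ne'
  have hlogB := hBd.log hB.ne'
  set D : ℝ := ((-(h * p) / σ^2) / (1 + (1 - α) * h * p / σ^2)
      - ((-(g * p) * (α * g * p + σ^2) - (1 - α) * g * p * (g * p)) / (α * g * p + σ^2)^2)
        / (1 + (1 - α) * g * p / (α * g * p + σ^2))) / Real.log 2 with hD
  have hφd : HasDerivAt φ D α := by
    have hfin : HasDerivAt (fun x : ℝ =>
        (Real.log (1 + (1 - x) * h * p / σ^2)
          - Real.log (1 + (1 - x) * g * p / (x * g * p + σ^2))) / Real.log 2) D α :=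
      (hlogA.sub hlogB).div_const _
    have hfe : φ = fun x : ℝ =>
        (Real.log (1 + (1 - x) * h * p / σ^2)
          - Real.log (1 + (1 - x) * g * p / (x * g * p + σ^2))) / Real.log 2 := by
      funext x
      rw [hφ x]
      simp [Real.logb, sub_div]
    rw [hfe]
    exact hfin
  have hD0 : D = 0 := by rw [← hφd.deriv]; exact hder
  have hlog2 : Real.log 2 ≠ 0 := by
    have : (0:ℝ) < Real.log 2 := Real.log_pos (by norm_num)
    exact this.ne'
  rw [hD] at hD0
  have hAne : (1 + (1 - α) * h * p / σ^2) ≠ 0 := hA.ne'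
  have hBne : (1 + (1 - α) * g * p / (α * g * p + σ^2)) ≠ 0 := hB.ne'
  field_simp at hD0
  have hfac : σ^2 * (g * p + σ^2) * (α * g * p + σ^2) * p *
      (α * (2 * h * g * p) - (h * g * p + σ^2 * (g - h))) = 0 := by
    linear_combination (-(σ^2 * (α * g * p + σ^2))) * hD0
  have hz : α * (2 * h * g * p) - (h * g * p + σ^2 * (g - h)) = 0 := by
    have hpos : 0 < σ^2 * (g * p + σ^2) * (α * g * p + σ^2) * p := by positivity
    rcases mul_eq_zero.mp hfac with h1 | h2
    · exact absurd h1 hpos.ne'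
    · exact h2
  field_simp
  linear_combination hz
end
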